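/- For any two positive semi-definite matrices A, B in R^{k×k}, the operator norm of A^{1/2} - B^{1/2} is at most ||A - B|| divided by the sum of the smallest eigenvalues of A^{1/2} and B^{1/2} (assuming this sum is positive). -/

import Mathlib

open Matrix

namespace Matrix.PosSemidef

open scoped ComplexOrder

variable {n 𝕜 : Type*} [Fintype n] [RCLike 𝕜] [DecidableEq n] {A : Matrix n n 𝕜}

/-- The positive semidefinite square root of a positive semidefinite matrix -/
noncomputable def sqrt (hA : A.PosSemidef) : Matrix n n 𝕜 :=
  hA.1.eigenvectorUnitary.1 * diagonal ((↑) ∘ (√·) ∘ hA.1.eigenvalues) *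
  (star hA.1.eigenvectorUnitary : Matrix n n 𝕜)

lemma posSemidef_sqrt (hA : A.PosSemidef) : PosSemidef hA.sqrt := by
  apply PosSemidef.mul_mul_conjTranspose_same
  refine posSemidef_diagonal_iff.mpr fun i ↦ ?_
  rw [Function.comp_apply, RCLike.nonneg_iff]
  constructor
  · simp only [RCLike.ofReal_re]
    exact Real.sqrt_nonneg _
  · simp only [RCLike.ofReal_im]

end Matrix.PosSemidef

/-- Operator (spectral) norm of a real matrix, viewed as a linear map between
Euclidean spaces. -/
noncomputable def opNorm {m n : Type*} [Fintype m] [Fintype n] [DecidableEq n]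
    (M : Matrix m n ℝ) : ℝ :=
  ‖LinearMap.toContinuousLinearMap (Matrix.toEuclideanLin M)‖

/-- Smallest eigenvalue of a Hermitian (symmetric) real matrix. -/
noncomputable def minEig {k : ℕ} (A : Matrix (Fin k) (Fin k) ℝ) (hA : A.IsHermitian) : ℝ :=
  ⨅ i, hA.eigenvalues i

/-! Put `S = √A`, `T = √B`, `D = S - T`, so that `A - B = S D + D T`. For an eigenvector `v` of the
symmetric `D` with eigenvalue `λ`, symmetry of `D` gives `⟪(A - B) v, v⟫ = λ (⟪S v, v⟫ + ⟪T v, v⟫)`,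
and the bracket is at least `(μ_k(S) + μ_k(T)) ‖v‖²`; hence `|λ| (μ_k(S) + μ_k(T)) ≤ ‖A - B‖`.
The norm of the symmetric `D` is the largest such `|λ|`. -/

open scoped RealInnerProductSpace

namespace ContinuousLinearMap

variable {E : Type*} [NormedAddCommGroup E] [InnerProductSpace ℝ E]

lemma inner_mul_self_sub_mul_self_apply_of_eigenvector {S T : E →L[ℝ] E}
    (hST : (S - T : E →ₗ[ℝ] E).IsSymmetric) {v : E} {μ : ℝ} (hv : (S - T) v = μ • v) :
    ⟪(S * S - T * T) v, v⟫ = μ * (⟪S v, v⟫ + ⟪T v, v⟫) := by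
  have hfactor : S * S - T * T = S * (S - T) + (S - T) * T := by noncomm_ring
  have hsymm : ⟪(S - T) (T v), v⟫ = ⟪T v, (S - T) v⟫ := hST _ _
  rw [hfactor, _root_.add_apply, mul_apply_eq_comp, mul_apply_eq_comp, inner_add_left, hsymm, hv,
    map_smul, real_inner_smul_left, real_inner_smul_right]
  ring

lemma abs_eigenvalue_mul_le_norm_mul_self_sub_mul_self {S T : E →L[ℝ] E}
    (hST : (S - T : E →ₗ[ℝ] E).IsSymmetric) {a b : ℝ} (hSa : ∀ x, a * ‖x‖ ^ 2 ≤ ⟪S x, x⟫)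
    (hTb : ∀ x, b * ‖x‖ ^ 2 ≤ ⟪T x, x⟫) (hab : 0 ≤ a + b) {v : E} (hv₀ : v ≠ 0) {μ : ℝ}
    (hv : (S - T) v = μ • v) :
    |μ| * (a + b) ≤ ‖S * S - T * T‖ := by
  have hv_sq : 0 < ‖v‖ ^ 2 := by positivity
  have hsum : (a + b) * ‖v‖ ^ 2 ≤ ⟪S v, v⟫ + ⟪T v, v⟫ := by
    linarith [hSa v, hTb v]
  have hrayleigh := (S * S - T * T).rayleighQuotient_le_norm v
  rw [rayleighQuotient, reApplyInnerSelf_apply, RCLike.re_to_real,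
    inner_mul_self_sub_mul_self_apply_of_eigenvector hST hv, abs_div, abs_mul, abs_sq,
    abs_of_nonneg ((mul_nonneg hab hv_sq.le).trans hsum), div_le_iff₀ hv_sq] at hrayleigh
  refine le_of_mul_le_mul_right ?_ hv_sq
  calc |μ| * (a + b) * ‖v‖ ^ 2 ≤ |μ| * (⟪S v, v⟫ + ⟪T v, v⟫) := by
        rw [mul_assoc]; exact mul_le_mul_of_nonneg_left hsum (abs_nonneg μ)
    _ ≤ _ := hrayleigh

lemma norm_le_of_forall_hasEigenvalue [FiniteDimensional ℝ E] {D : E →L[ℝ] E}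
    (hD : IsSelfAdjoint D) {c : ℝ} (hc : 0 ≤ c)
    (h : ∀ μ, Module.End.HasEigenvalue (D : E →ₗ[ℝ] E) μ → |μ| ≤ c) : ‖D‖ ≤ c := by
  have hρ : spectralRadius ℝ D ≤ ENNReal.ofReal c := by
    refine iSup₂_le fun μ hμ ↦ ?_
    rw [spectrum_eq, ← Module.End.hasEigenvalue_iff_mem_spectrum] at hμ
    simpa [ENNReal.le_ofReal_iff_toReal_le ENNReal.coe_ne_top hc] using h μ hμ
  rw [D.spectralRadius_eq_nnnorm hD, ENNReal.le_ofReal_iff_toReal_le ENNReal.coe_ne_top hc] at hρ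
  simpa using hρ

theorem norm_sub_le_norm_mul_self_sub_mul_self_div [FiniteDimensional ℝ E] {S T : E →L[ℝ] E}
    (hS : IsSelfAdjoint S) (hT : IsSelfAdjoint T) {a b : ℝ}
    (hSa : ∀ x, a * ‖x‖ ^ 2 ≤ ⟪S x, x⟫) (hTb : ∀ x, b * ‖x‖ ^ 2 ≤ ⟪T x, x⟫) (hab : 0 < a + b) :
    ‖S - T‖ ≤ ‖S * S - T * T‖ / (a + b) := by
  have hST := hS.sub hT
  refine norm_le_of_forall_hasEigenvalue hST (by positivity) fun μ hμ ↦ ?_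
  obtain ⟨v, hv⟩ := hμ.exists_hasEigenvector
  rw [le_div_iff₀ hab]
  exact abs_eigenvalue_mul_le_norm_mul_self_sub_mul_self hST.isSymmetric hSa hTb hab.le hv.2
    hv.apply_eq_smul

end ContinuousLinearMap

lemma opNorm_eq_norm_toEuclideanCLM {n : Type*} [Fintype n] [DecidableEq n] (M : Matrix n n ℝ) :
    opNorm M = ‖toEuclideanCLM (n := n) (𝕜 := ℝ) M‖ :=
  rfl

namespace Matrix

namespace PosSemidef

open scoped ComplexOrder

variable {n 𝕜 : Type*} [Fintype n] [RCLike 𝕜] [DecidableEq n] {A : Matrix n n 𝕜}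

lemma sqrt_eq_cfc (hA : A.PosSemidef) : hA.sqrt = cfc Real.sqrt A := by
  rw [hA.1.cfc_eq]
  rfl

lemma sqrt_mul_sqrt (hA : A.PosSemidef) : hA.sqrt * hA.sqrt = A := by
  rw [hA.sqrt_eq_cfc, ← cfc_mul Real.sqrt Real.sqrt A]
  conv_rhs => rw [← cfc_id' ℝ A hA.1.isSelfAdjoint]
  refine cfc_congr fun x hx ↦ ?_
  rw [hA.1.spectrum_real_eq_range_eigenvalues] at hx
  obtain ⟨i, rfl⟩ := hx
  exact Real.mul_self_sqrt (hA.eigenvalues_nonneg i)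

end PosSemidef

open scoped MatrixOrder in
lemma IsHermitian.minEig_mul_norm_sq_le_inner {k : ℕ} {M : Matrix (Fin k) (Fin k) ℝ}
    (hM : M.IsHermitian) (x : EuclideanSpace ℝ (Fin k)) :
    minEig M hM * ‖x‖ ^ 2 ≤ ⟪toEuclideanCLM (𝕜 := ℝ) M x, x⟫ := by
  have hle : algebraMap ℝ _ (minEig M hM) ≤ M := by
    refine (algebraMap_le_iff_le_spectrum hM.isSelfAdjoint).2 fun μ hμ ↦ ?_
    rw [hM.spectrum_real_eq_range_eigenvalues] at hμ
    obtain ⟨i, rfl⟩ := hμ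
    exact ciInf_le (Finite.bddBelow_range _) i
  have hpos := (isPositive_toEuclideanLin_iff.2 (le_iff.1 hle)).2 x
  rw [← coe_toEuclideanCLM_eq_toEuclideanLin, map_sub, AlgHomClass.commutes] at hpos
  simp only [FunLike.coe_sub, Pi.sub_apply, ContinuousLinearMap.coe_coe,
    ContinuousLinearMap.algebraMap_apply, inner_sub_left, real_inner_smul_left,
    real_inner_self_eq_norm_sq, RCLike.re_to_real] at hpos
  linarith

end Matrix

/-- For PSD matrices `A, B`, `‖√A - √B‖ ≤ ‖A - B‖ / (μ_min(√A) + μ_min(√B))`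
provided the denominator is positive. -/
theorem sqrt_diff_opNorm_le {k : ℕ} (A B : Matrix (Fin k) (Fin k) ℝ)
    (hA : A.PosSemidef) (hB : B.PosSemidef)
    (hpos : 0 < minEig hA.sqrt hA.posSemidef_sqrt.1 + minEig hB.sqrt hB.posSemidef_sqrt.1) :
    opNorm (hA.sqrt - hB.sqrt) ≤
      opNorm (A - B) / (minEig hA.sqrt hA.posSemidef_sqrt.1 + minEig hB.sqrt hB.posSemidef_sqrt.1) := by
  have hS := hA.posSemidef_sqrt.1
  have hT := hB.posSemidef_sqrt.1
  have hAB : A - B = hA.sqrt * hA.sqrt - hB.sqrt * hB.sqrt := by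
    rw [hA.sqrt_mul_sqrt, hB.sqrt_mul_sqrt]
  rw [opNorm_eq_norm_toEuclideanCLM, opNorm_eq_norm_toEuclideanCLM, hAB, map_sub, map_sub,
    map_mul, map_mul]
  exact ContinuousLinearMap.norm_sub_le_norm_mul_self_sub_mul_self_div
    (hS.isSelfAdjoint.map _) (hT.isSelfAdjoint.map _) hS.minEig_mul_norm_sq_le_inner
    hT.minEig_mul_norm_sq_le_inner hpos
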